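/- If f : ℝ^d → [0,∞) is measurable, not a.e. zero, and integrable with ∫ f(w)|v−w|^{γ+2} dw < ∞, then the Landau diffusion matrix A[f](v) = ∫ Π(v−w)|v−w|^{γ+2} f(w) dw is symmetric positive semidefinite; and it is positive definite provided f is positive on a set of positive measure not contained in any line through v. -/

import Mathlib

/-!
For `u ≠ 0`, `Π(u)` is the orthogonal projection onto `u^⊥`, so its quadratic form is
`‖x‖² - ⟪u, x⟫² / ‖u‖² ≥ 0` by Cauchy–Schwarz, with equality only when `u` is parallel to `x`.
Quadratic forms commute with the entrywise integral, so `x ⬝ A x` is the integral of a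
nonnegative function. For `x ≠ 0` that function is positive wherever `f(w) > 0` and `w` lies
off the line `v + ℝx`; a line is Lebesgue-null, so a positive-measure set on which `f > 0`
makes the integral positive.
-/

open MeasureTheory Classical

/-- The projection kernel of the Landau operator, with Π(0) = 0. -/

noncomputable def landauProj (u : EuclideanSpace ℝ (Fin 3)) :
    Matrix (Fin 3) (Fin 3) ℝ :=
  if u = 0 then 0
  else Matrix.of fun i j => (if i = j then (1 : ℝ) else 0) - u i * u j / ‖u‖ ^ 2

open Matrix RealInnerProductSpace

section MatrixIntegral

variable {α n : Type*} [MeasurableSpace α] {μ : Measure α}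
  {K : α → Matrix n n ℝ} {A : Matrix n n ℝ}

theorem Matrix.IsSymm.of_forall_eq_integral (hA : ∀ i j, A i j = ∫ a, K a i j ∂μ)
    (hK : ∀ a, (K a).IsSymm) : A.IsSymm :=
  IsSymm.ext fun i j => by simp only [hA, fun a => (hK a).apply i j]

variable [Fintype n]

theorem Matrix.integrable_dotProduct_mulVec (hK : ∀ i j, Integrable (fun a => K a i j) μ)
    (x : n → ℝ) : Integrable (fun a => x ⬝ᵥ K a *ᵥ x) μ := by
  simp only [dotProduct, mulVec, Finset.mul_sum]
  exact integrable_finsetSum _ fun i _ => integrable_finsetSum _ fun j _ =>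
    ((hK i j).mul_const _).const_mul _

theorem Matrix.dotProduct_mulVec_eq_integral (hK : ∀ i j, Integrable (fun a => K a i j) μ)
    (hA : ∀ i j, A i j = ∫ a, K a i j ∂μ) (x : n → ℝ) :
    x ⬝ᵥ A *ᵥ x = ∫ a, x ⬝ᵥ K a *ᵥ x ∂μ := by
  have hint : ∀ i j, Integrable (fun a => x i * (K a i j * x j)) μ := fun i j =>
    ((hK i j).mul_const _).const_mul _
  simp only [dotProduct, mulVec, hA, Finset.mul_sum]
  rw [integral_finsetSum _ fun i _ => integrable_finsetSum _ fun j _ => hint i j]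
  refine Finset.sum_congr rfl fun i _ => ?_
  rw [integral_finsetSum _ fun j _ => hint i j]
  simp only [integral_mul_const, integral_const_mul]

theorem Matrix.PosSemidef.of_forall_eq_integral (hK : ∀ i j, Integrable (fun a => K a i j) μ)
    (hA : ∀ i j, A i j = ∫ a, K a i j ∂μ) (hpsd : ∀ a, (K a).PosSemidef) : A.PosSemidef := by
  refine posSemidef_iff_dotProduct_mulVec.mpr
    ⟨IsSymm.of_forall_eq_integral hA fun a => (hpsd a).isHermitian, fun x => ?_⟩
  rw [star_trivial, dotProduct_mulVec_eq_integral hK hA]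
  exact integral_nonneg fun a => by simpa using (hpsd a).dotProduct_mulVec_nonneg x

theorem Matrix.PosDef.of_forall_eq_integral (hK : ∀ i j, Integrable (fun a => K a i j) μ)
    (hA : ∀ i j, A i j = ∫ a, K a i j ∂μ) (hpsd : ∀ a, (K a).PosSemidef)
    (hsupp : ∀ x : n → ℝ, x ≠ 0 → 0 < μ (Function.support fun a => x ⬝ᵥ K a *ᵥ x)) :
    A.PosDef := by
  refine posDef_iff_dotProduct_mulVec.mpr
    ⟨IsSymm.of_forall_eq_integral hA fun a => (hpsd a).isHermitian, fun x hx => ?_⟩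
  rw [star_trivial, dotProduct_mulVec_eq_integral hK hA,
    integral_pos_iff_support_of_nonneg (fun a => by simpa using (hpsd a).dotProduct_mulVec_nonneg x)
      (integrable_dotProduct_mulVec hK x)]
  exact hsupp x hx

end MatrixIntegral

theorem MeasureTheory.Measure.addHaar_line {E : Type*} [NormedAddCommGroup E] [NormedSpace ℝ E]
    [MeasurableSpace E] [BorelSpace E] [FiniteDimensional ℝ E] (μ : Measure E) [μ.IsAddHaarMeasure]
    (hE : 1 < Module.finrank ℝ E) (v u : E) : μ {w | ∃ c : ℝ, w = v + c • u} = 0 := by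
  have hspan : ℝ ∙ u ≠ ⊤ := fun htop => by
    have := finrank_span_le_card (R := ℝ) ({u} : Set E)
    rw [htop, finrank_top] at this
    simp at this
    omega
  refine measure_mono_null (t := AffineSubspace.mk' v (ℝ ∙ u)) ?_
    (Measure.addHaar_affineSubspace μ _ fun h => hspan ?_)
  · rintro w ⟨c, rfl⟩
    simp [AffineSubspace.mem_mk', Submodule.mem_span_singleton]
  · rw [← AffineSubspace.direction_mk' v (ℝ ∙ u), h, AffineSubspace.direction_top]

section LandauProj

variable {u : EuclideanSpace ℝ (Fin 3)}

theorem landauProj_of_ne_zero (hu : u ≠ 0) :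
    landauProj u = 1 - (‖u‖ ^ 2)⁻¹ • vecMulVec u.ofLp u.ofLp := by
  ext i j
  simp [landauProj, hu, one_apply, vecMulVec, div_eq_inv_mul]

theorem measurable_landauProj_apply (i j : Fin 3) : Measurable fun u => landauProj u i j := by
  simp only [landauProj, apply_ite (fun M : Matrix (Fin 3) (Fin 3) ℝ => M i j), of_apply,
    Matrix.zero_apply]
  exact Measurable.ite (measurableSet_singleton 0) measurable_const (by fun_prop)

theorem abs_landauProj_apply_le (u : EuclideanSpace ℝ (Fin 3)) (i j : Fin 3) :
    |landauProj u i j| ≤ 2 := by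
  rcases eq_or_ne u 0 with rfl | hu
  · simp [landauProj]
  have hcoord : |u i * u j| ≤ ‖u‖ ^ 2 := by
    rw [abs_mul, sq]
    exact mul_le_mul (PiLp.norm_apply_le u i) (PiLp.norm_apply_le u j) (abs_nonneg _)
      (norm_nonneg _)
  have hu2 : 0 < ‖u‖ ^ 2 := by positivity
  simp only [landauProj, if_neg hu, of_apply]
  calc |(if i = j then (1 : ℝ) else 0) - u i * u j / ‖u‖ ^ 2|
      ≤ |(if i = j then (1 : ℝ) else 0)| + |u i * u j / ‖u‖ ^ 2| := abs_sub _ _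
    _ ≤ 1 + 1 := by
        gcongr
        · split_ifs <;> simp
        · rw [abs_div, abs_of_pos hu2]
          exact (div_le_one hu2).mpr hcoord
    _ = 2 := by norm_num

theorem landauProj_isSymm (u : EuclideanSpace ℝ (Fin 3)) : (landauProj u).IsSymm := by
  rcases eq_or_ne u 0 with rfl | hu
  · simp [landauProj, IsSymm]
  rw [landauProj_of_ne_zero hu]
  have hsymm : (vecMulVec u.ofLp u.ofLp).IsSymm := IsSymm.ext fun i j => mul_comm _ _
  exact isSymm_one.sub (hsymm.smul _)

theorem dotProduct_landauProj_mulVec (hu : u ≠ 0) (x : EuclideanSpace ℝ (Fin 3)) :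
    x.ofLp ⬝ᵥ landauProj u *ᵥ x.ofLp = ‖x‖ ^ 2 - ⟪u, x⟫ ^ 2 / ‖u‖ ^ 2 := by
  have hinner : ∀ y z : EuclideanSpace ℝ (Fin 3), y.ofLp ⬝ᵥ z.ofLp = ⟪y, z⟫ := fun y z => by
    simp [EuclideanSpace.inner_eq_star_dotProduct, dotProduct_comm]
  rw [landauProj_of_ne_zero hu, sub_mulVec, one_mulVec, smul_mulVec, vecMulVec_mulVec,
    dotProduct_sub, dotProduct_smul, dotProduct_smul]
  simp [hinner, real_inner_comm x u, div_eq_inv_mul, sq]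

theorem landauProj_posSemidef (u : EuclideanSpace ℝ (Fin 3)) : (landauProj u).PosSemidef := by
  refine posSemidef_iff_dotProduct_mulVec.mpr ⟨landauProj_isSymm u, fun x => ?_⟩
  rcases eq_or_ne u 0 with rfl | hu
  · simp [landauProj]
  rw [star_trivial, ← WithLp.ofLp_toLp 2 x, dotProduct_landauProj_mulVec hu, sub_nonneg,
    div_le_iff₀ (by positivity), ← sq_abs, ← mul_pow, mul_comm]
  exact pow_le_pow_left₀ (abs_nonneg _) (abs_real_inner_le_norm _ _) 2

theorem dotProduct_landauProj_mulVec_pos {x : EuclideanSpace ℝ (Fin 3)} (hx : x ≠ 0)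
    (hu : u ∉ ℝ ∙ x) : 0 < x.ofLp ⬝ᵥ landauProj u *ᵥ x.ofLp := by
  have hu0 : u ≠ 0 := fun h => hu (h ▸ Submodule.zero_mem _)
  have hcs : |⟪u, x⟫| < ‖u‖ * ‖x‖ := by
    refine (abs_real_inner_le_norm u x).lt_of_ne fun heq => hu ?_
    obtain ⟨r, hr, rfl⟩ := (norm_inner_eq_norm_iff (𝕜 := ℝ) hu0 hx).mp heq
    exact Submodule.mem_span_singleton.mpr ⟨r⁻¹, inv_smul_smul₀ hr u⟩
  rw [dotProduct_landauProj_mulVec hu0, sub_pos, div_lt_iff₀ (by positivity), ← sq_abs,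
    ← mul_pow, mul_comm]
  exact pow_lt_pow_left₀ hcs (abs_nonneg _) two_ne_zero

end LandauProj

section LandauKernel

variable (γ : ℝ) (f : EuclideanSpace ℝ (Fin 3) → ℝ) (v : EuclideanSpace ℝ (Fin 3))

noncomputable def landauKernel (w : EuclideanSpace ℝ (Fin 3)) : Matrix (Fin 3) (Fin 3) ℝ :=
  (‖v - w‖ ^ (γ + 2) * f w) • landauProj (v - w)

theorem landauKernel_apply (w : EuclideanSpace ℝ (Fin 3)) (i j : Fin 3) :
    landauKernel γ f v w i j = landauProj (v - w) i j * ‖v - w‖ ^ (γ + 2) * f w := by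
  simp only [landauKernel, Matrix.smul_apply, smul_eq_mul]
  ring

variable {γ f v}

theorem integrable_landauKernel_apply
    (hint : Integrable fun w : EuclideanSpace ℝ (Fin 3) => ‖v - w‖ ^ (γ + 2) * f w)
    (i j : Fin 3) : Integrable fun w => landauKernel γ f v w i j := by
  simp only [landauKernel, Matrix.smul_apply, smul_eq_mul]
  exact hint.mul_bdd ((measurable_landauProj_apply i j).comp (measurable_const.sub measurable_id)
    |>.aestronglyMeasurable) (ae_of_all _ fun w => abs_landauProj_apply_le _ i j)

theorem landauKernel_posSemidef (hpos : ∀ w, 0 ≤ f w) (w : EuclideanSpace ℝ (Fin 3)) :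
    (landauKernel γ f v w).PosSemidef :=
  (landauProj_posSemidef _).smul (mul_nonneg (by positivity) (hpos w))

theorem volume_support_dotProduct_landauKernel_mulVec_pos {S : Set (EuclideanSpace ℝ (Fin 3))}
    (hS : 0 < volume S) (hSf : ∀ w ∈ S, 0 < f w) {x : Fin 3 → ℝ} (hx : x ≠ 0) :
    0 < volume (Function.support fun w => x ⬝ᵥ landauKernel γ f v w *ᵥ x) := by
  set x' : EuclideanSpace ℝ (Fin 3) := WithLp.toLp 2 x
  have hx' : x' ≠ 0 := fun h => hx (congrArg WithLp.ofLp h)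
  set L := {w | ∃ c : ℝ, w = v + c • x'}
  have hsub : S \ L ⊆ Function.support fun w => x ⬝ᵥ landauKernel γ f v w *ᵥ x := by
    rintro w ⟨hwS, hwL⟩
    have hvw : v - w ∉ ℝ ∙ x' := fun h => by
      obtain ⟨c, hc⟩ := Submodule.mem_span_singleton.mp h
      exact hwL ⟨-c, by rw [neg_smul, hc]; abel⟩
    have hvw0 : v - w ≠ 0 := fun h => hvw (h ▸ Submodule.zero_mem _)
    refine ne_of_gt ?_
    simp only [landauKernel, smul_mulVec, dotProduct_smul, smul_eq_mul]
    exact mul_pos (mul_pos (Real.rpow_pos_of_pos (norm_pos_iff.mpr hvw0) _) (hSf w hwS))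
      (dotProduct_landauProj_mulVec_pos hx' hvw)
  calc 0 < volume S := hS
    _ = volume (S \ L) := (measure_sdiff_null (Measure.addHaar_line volume (by simp) v x')).symm
    _ ≤ _ := measure_mono hsub

end LandauKernel

theorem landau_diffusion_matrix_general (γ : ℝ)
    (f : EuclideanSpace ℝ (Fin 3) → ℝ)
    (hpos : ∀ w, 0 ≤ f w)
    (v : EuclideanSpace ℝ (Fin 3))
    (hint : Integrable fun w : EuclideanSpace ℝ (Fin 3) =>
      ‖v - w‖ ^ (γ + 2) * f w)
    (A : Matrix (Fin 3) (Fin 3) ℝ)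
    (hA : ∀ i j, A i j = ∫ w : EuclideanSpace ℝ (Fin 3),
      landauProj (v - w) i j * ‖v - w‖ ^ (γ + 2) * f w) :
    A.IsSymm ∧ A.PosSemidef ∧
    ((∃ S : Set (EuclideanSpace ℝ (Fin 3)), MeasurableSet S ∧ 0 < volume S ∧
        (∀ w ∈ S, 0 < f w) ∧
        ∀ u : EuclideanSpace ℝ (Fin 3), u ≠ 0 →
          ¬ S ⊆ {w | ∃ c : ℝ, w = v + c • u}) → A.PosDef) := by
  have hKA : ∀ i j, A i j = ∫ w, landauKernel γ f v w i j := by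
    simp only [hA, landauKernel_apply, implies_true]
  have hKint := integrable_landauKernel_apply hint
  have hKpsd := landauKernel_posSemidef (γ := γ) (v := v) hpos
  refine ⟨IsSymm.of_forall_eq_integral hKA fun w => (hKpsd w).isHermitian,
    PosSemidef.of_forall_eq_integral hKint hKA hKpsd, ?_⟩
  rintro ⟨S, -, hS, hSf, -⟩
  exact PosDef.of_forall_eq_integral hKint hKA hKpsd fun x hx =>
    volume_support_dotProduct_landauKernel_mulVec_pos hS hSf hx

/-- The Landau diffusion matrix A[f](v) = ∫ Π(v−w)‖v−w‖^{γ+2} f(w) dw is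
symmetric positive semidefinite, and positive definite if f is positive on a
set of positive measure not contained in any line through v. -/
theorem landau_diffusion_matrix (γ : ℝ) (hγ : γ ∈ Set.Icc (-3 : ℝ) 1)
    (f : EuclideanSpace ℝ (Fin 3) → ℝ)
    (hmeas : Measurable f) (hpos : ∀ w, 0 ≤ f w)
    (hne : ¬ (∀ᵐ w : EuclideanSpace ℝ (Fin 3), f w = 0))
    (v : EuclideanSpace ℝ (Fin 3))
    (hint : Integrable fun w : EuclideanSpace ℝ (Fin 3) =>
      ‖v - w‖ ^ (γ + 2) * f w)
    (A : Matrix (Fin 3) (Fin 3) ℝ)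
    (hA : ∀ i j, A i j = ∫ w : EuclideanSpace ℝ (Fin 3),
      landauProj (v - w) i j * ‖v - w‖ ^ (γ + 2) * f w) :
    A.IsSymm ∧ A.PosSemidef ∧
    ((∃ S : Set (EuclideanSpace ℝ (Fin 3)), MeasurableSet S ∧ 0 < volume S ∧
        (∀ w ∈ S, 0 < f w) ∧
        ∀ u : EuclideanSpace ℝ (Fin 3), u ≠ 0 →
          ¬ S ⊆ {w | ∃ c : ℝ, w = v + c • u}) → A.PosDef) :=
  landau_diffusion_matrix_general γ f hpos v hint A hA
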